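/- Let 𝒵 be a nonempty finite type and let φ, ψ be probability measures on 𝒵 with φ absolutely continuous with respect to ψ. Let (𝒵₀, Π₀) be a probability space, let loss : 𝒵₀ × 𝒵 → (0,1) be measurable, let M ≥ 2 be an integer, and let Z₀^(1),…,Z₀^(M) be i.i.d. random elements of 𝒵₀ with law Π₀. Define R(Π_M, φ) = (1/M)·Σ_{v=1}^M E_{Ẑ∼φ}[loss(Z₀^(v), Ẑ)] and R(Π₀, φ) = E_{Z₀∼Π₀} E_{Ẑ∼φ}[loss(Z₀, Ẑ)]. Then for every δ ∈ (0,1), with probability at least 1−δ over the draw of (Z₀^(1),…,Z₀^(M)), on the event that R(Π_M, φ) ∈ (0,1), we have M·kl( R(Π_M, φ) ‖ R(Π₀, φ) ) ≤ KL(φ‖ψ) + log( exp(1/(12M))·√(πM/2) + 2 ) − log δ. -/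

import Mathlib

/-
`φ` is fixed, so `KL(φ‖ψ) ≥ 0` (Gibbs) and it suffices to bound the exponential moment
`E[exp (M · kl(R_M ‖ R₀))] ≤ ξ := e^{1/(12M)} √(πM/2) + 2`: Markov's inequality then gives
`M · kl(R_M ‖ R₀) < log ξ - log δ` with probability at least `1 - δ`.

`M · R_M` is a sum of `M` i.i.d. `[0,1]`-valued variables with mean `p = R₀`, and
`s ↦ exp (M · kl(s/M ‖ p))` is convex on `[0, M]`, so by Maurer's argument its expectation is at
most the one under `K ∼ Bin(M, p)`. In that binomial expectation the `k`-th term equals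
`C(M,k) (k/M)^k ((M-k)/M)^(M-k)`: the two extreme terms are `1`, and by Stirling's bounds
(with Robbins' `e^{1/(12n)}` correction) each inner term is at most
`e^{1/(12M)} √(M/2π) / √(k(M-k))`. The sum of `1/√(k(M-k))` over `0 < k < M` is at most
`∫_{1/2}^{M-1/2} dx/√(x(M-x)) ≤ π`, because the integrand is midpoint convex.
-/

open MeasureTheory

/-- Binary Kullback–Leibler divergence `kl(a‖b)`. -/
noncomputable def klBin (a b : ℝ) : ℝ :=
  a * Real.log (a / b) + (1 - a) * Real.log ((1 - a) / (1 - b))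

open Real Finset Filter Topology

section Stirling

open scoped Nat

theorem stirlingSeq_le_sqrt_pi_mul_exp {n : ℕ} (hn : n ≠ 0) :
    Stirling.stirlingSeq n ≤ √π * exp (1 / (12 * n)) := by
  obtain ⟨m, rfl⟩ := Nat.exists_eq_succ_of_ne_zero hn
  -- Robbins' bound makes `log sₖ - 1/(12k)` increasing; its limit is `log √π`.
  set a : ℕ → ℝ := fun k => log (Stirling.stirlingSeq (k + 1)) - 1 / (12 * (k + 1 : ℕ))
  have ha : Monotone a := by
    refine monotone_nat_of_le_succ fun k => ?_
    have h := Stirling.log_stirlingSeq_sdiff_le (k + 1)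
    have e : (1 : ℝ) / (12 * ((k + 1 : ℕ) : ℝ) * ((k + 1 : ℕ) + 1)) =
        1 / (12 * (k + 1 : ℕ)) - 1 / (12 * (k + 1 + 1 : ℕ)) := by
      push_cast; field_simp; ring
    simp only [a]
    linarith
  have hlim : Tendsto a atTop (𝓝 (log √π - 0)) := by
    refine ((continuousAt_log (by positivity)).tendsto.comp
      (Stirling.tendsto_stirlingSeq_sqrt_pi.comp (tendsto_add_atTop_nat 1))).sub ?_
    exact tendsto_const_nhds.div_atTop
      ((tendsto_natCast_atTop_atTop.comp (tendsto_add_atTop_nat 1)).const_mul_atTop (by norm_num))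
  have hle := ha.ge_of_tendsto hlim m
  simp only [a, sub_zero] at hle
  rw [← exp_log (Stirling.stirlingSeq'_pos m), ← exp_log (by positivity : 0 < √π), ← exp_add]
  exact exp_le_exp.mpr (by linarith)

theorem factorial_le_stirling_mul_exp {n : ℕ} (hn : n ≠ 0) :
    (n ! : ℝ) ≤ √(2 * π * n) * (n / exp 1) ^ n * exp (1 / (12 * n)) := by
  have h := stirlingSeq_le_sqrt_pi_mul_exp hn
  rw [Stirling.stirlingSeq, div_le_iff₀ (by positivity)] at h
  calc (n ! : ℝ) ≤ _ := h
    _ = _ := by rw [show 2 * π * n = π * (2 * n) by ring, sqrt_mul pi_pos.le]; ring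

theorem add_choose_mul_div_pow_mul_div_pow_le {k j : ℕ} (hk : k ≠ 0) (hj : j ≠ 0) :
    ((k + j).choose k : ℝ) * (k / (k + j)) ^ k * (j / (k + j)) ^ j ≤
      exp (1 / (12 * (k + j))) * √((k + j) / (2 * π)) / √(k * j) := by
  have hfac : ((k + j).choose k : ℝ) * (k ! * j !) = (k + j)! := by
    rw [← mul_assoc, Nat.choose_symm_add]
    exact_mod_cast Nat.add_choose_mul_factorial_mul_factorial k j
  have hup := factorial_le_stirling_mul_exp (n := k + j) (by omega)
  push_cast at hup
  set n : ℝ := k + j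
  have hn0 : n ≠ 0 := by positivity
  have hpow : (k / n) ^ k * (j / n) ^ j * (n / exp 1) ^ (k + j) =
      (k / exp 1) ^ k * (j / exp 1) ^ j := by
    rw [pow_add, mul_mul_mul_comm, ← mul_pow, ← mul_pow, div_mul_div_cancel₀ hn0,
      div_mul_div_cancel₀ hn0]
  have hsqrt : √(n / (2 * π)) / √(k * j) * (√(2 * π * k) * √(2 * π * j)) = √(2 * π * n) := by
    rw [← sqrt_div' _ (by positivity), ← sqrt_mul (by positivity), ← sqrt_mul (by positivity)]
    congr 1
    field_simp
  rw [← mul_le_mul_iff_of_pos_right (by positivity : (0 : ℝ) < k ! * j !)]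
  calc ((k + j).choose k : ℝ) * (k / n) ^ k * (j / n) ^ j * (k ! * j !)
      = (k + j)! * ((k / n) ^ k * (j / n) ^ j) := by rw [← hfac]; ring
    _ ≤ √(2 * π * n) * (n / exp 1) ^ (k + j) * exp (1 / (12 * n)) *
          ((k / n) ^ k * (j / n) ^ j) := by gcongr
    _ = exp (1 / (12 * n)) * √(n / (2 * π)) / √(k * j) *
          ((√(2 * π * k) * (k / exp 1) ^ k) * (√(2 * π * j) * (j / exp 1) ^ j)) := by
      rw [← hsqrt]
      linear_combination
        (exp (1 / (12 * n)) * √(n / (2 * π)) / √(k * j) * √(2 * π * k) * √(2 * π * j)) * hpow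
    _ ≤ exp (1 / (12 * n)) * √(n / (2 * π)) / √(k * j) * (k ! * j !) := by
      gcongr <;> exact Stirling.le_factorial_stirling _

end Stirling

/-- Left half of the Hermite–Hadamard inequality, which only needs convexity at the midpoint. -/
theorem mul_le_intervalIntegral_of_midpoint {g : ℝ → ℝ} {a h : ℝ} (hh : 0 ≤ h)
    (hg : IntervalIntegrable g volume (a - h) (a + h))
    (hmid : ∀ t ∈ Set.Icc 0 h, 2 * g a ≤ g (a - t) + g (a + t)) :
    2 * h * g a ≤ ∫ x in (a - h)..(a + h), g x := by
  have hleft : IntervalIntegrable g volume (a - h) a :=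
    hg.mono_set (Set.uIcc_subset_uIcc_left (Set.mem_uIcc_of_le (by linarith) (by linarith)))
  have hright : IntervalIntegrable g volume a (a + h) :=
    hg.mono_set (Set.uIcc_subset_uIcc_right (Set.mem_uIcc_of_le (by linarith) (by linarith)))
  have hleft' : IntervalIntegrable (fun t => g (a - t)) volume 0 h := by
    simpa using (hleft.comp_sub_left a).symm
  have hright' : IntervalIntegrable (fun t => g (a + t)) volume 0 h := by
    simpa using hright.comp_add_left a
  calc 2 * h * g a = ∫ _ in (0 : ℝ)..h, 2 * g a := by simp; ring
    _ ≤ ∫ t in (0 : ℝ)..h, (g (a - t) + g (a + t)) :=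
      intervalIntegral.integral_mono_on hh intervalIntegrable_const (hleft'.add hright') hmid
    _ = ∫ x in (a - h)..(a + h), g x := by
      rw [intervalIntegral.integral_add hleft' hright', intervalIntegral.integral_comp_sub_left,
        intervalIntegral.integral_comp_add_left, sub_zero, add_zero,
        intervalIntegral.integral_add_adjacent_intervals hleft hright]

theorem two_div_sqrt_mul_sub_le {n a t : ℝ} (ht : 0 ≤ t) (hat : 0 < a - t) (htn : a + t < n) :
    2 / √(a * (n - a)) ≤ 1 / √((a - t) * (n - (a - t))) + 1 / √((a + t) * (n - (a + t))) := by
  have hA2 : 0 < (a - t) * (n - (a - t)) := mul_pos hat (by linarith)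
  have hB2 : 0 < (a + t) * (n - (a + t)) := mul_pos (by linarith) (by linarith)
  have hC2 : 0 < a * (n - a) := by nlinarith
  set A := √((a - t) * (n - (a - t)))
  set B := √((a + t) * (n - (a + t)))
  set C := √(a * (n - a))
  have hA0 : 0 < A := sqrt_pos.mpr hA2
  have hB0 : 0 < B := sqrt_pos.mpr hB2
  have hC0 : 0 < C := sqrt_pos.mpr hC2
  have hsq : C ^ 2 = (A ^ 2 + B ^ 2) / 2 + t ^ 2 := by
    simp only [A, B, C, sq_sqrt hA2.le, sq_sqrt hB2.le, sq_sqrt hC2.le]; ring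
  have hAB : A + B ≤ 2 * C := by nlinarith [sq_nonneg (A - B), sq_nonneg t]
  -- so `2 / C ≤ 4 / (A + B) ≤ 1 / A + 1 / B` (harmonic ≤ arithmetic mean)
  rw [div_add_div _ _ hA0.ne' hB0.ne', div_le_div_iff₀ hC0 (by positivity)]
  nlinarith [sq_nonneg (A - B)]

theorem hasDerivAt_arcsin_two_mul_div_sub_one {n x : ℝ} (hx : 0 < x) (hxn : x < n) :
    HasDerivAt (fun x => arcsin (2 * x / n - 1)) (1 / √(x * (n - x))) x := by
  have hn : 0 < n := hx.trans hxn
  have hlin : HasDerivAt (fun x : ℝ => 2 * x / n - 1) (2 / n) x := by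
    simpa using (((hasDerivAt_id x).const_mul 2).div_const n).sub_const 1
  have h := (hasDerivAt_arcsin (x := 2 * x / n - 1) (by intro h; field_simp at h; linarith)
    (by intro h; field_simp at h; linarith)).comp x hlin
  have he : 1 - (2 * x / n - 1) ^ 2 = (2 / n) ^ 2 * (x * (n - x)) := by field_simp; ring
  have hs : 0 < √(x * (n - x)) := sqrt_pos.mpr (by nlinarith)
  rw [he, sqrt_mul (by positivity), sqrt_sq (by positivity)] at h
  refine h.congr_deriv ?_
  field_simp

theorem intervalIntegrable_one_div_sqrt_mul_sub {n a b : ℝ} (ha : 0 < a) (hab : a ≤ b)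
    (hb : b < n) : IntervalIntegrable (fun x => 1 / √(x * (n - x))) volume a b := by
  refine ContinuousOn.intervalIntegrable fun x hx => ?_
  rw [Set.uIcc_of_le hab] at hx
  have : 0 < √(x * (n - x)) := sqrt_pos.mpr (by nlinarith [hx.1, hx.2])
  exact (continuousAt_const.div
    (continuous_id.mul (continuous_const.sub continuous_id)).continuousAt.sqrt
    this.ne').continuousWithinAt

theorem integral_one_div_sqrt_mul_sub {n a b : ℝ} (ha : 0 < a) (hab : a ≤ b) (hb : b < n) :
    ∫ x in a..b, 1 / √(x * (n - x)) = arcsin (2 * b / n - 1) - arcsin (2 * a / n - 1) := by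
  refine intervalIntegral.integral_eq_sub_of_hasDerivAt (f := fun x => arcsin (2 * x / n - 1))
    (fun x hx => ?_) (intervalIntegrable_one_div_sqrt_mul_sub ha hab hb)
  rw [Set.uIcc_of_le hab] at hx
  exact hasDerivAt_arcsin_two_mul_div_sub_one (ha.trans_le hx.1) (hx.2.trans_lt hb)

theorem sum_antidiagonal_one_div_sqrt_le_pi (m : ℕ) :
    ∑ ij ∈ antidiagonal m, 1 / √(((ij.1 : ℝ) + 1) * (ij.2 + 1)) ≤ π := by
  set n : ℝ := m + 2
  set g : ℝ → ℝ := fun x => 1 / √(x * (n - x))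
  set a : ℕ → ℝ := fun i => i + 1 / 2
  have hint : ∀ i < m + 1, IntervalIntegrable g volume (a i) (a (i + 1)) := by
    intro i hi
    have : (i : ℝ) ≤ m := by exact_mod_cast Nat.lt_succ_iff.mp hi
    exact intervalIntegrable_one_div_sqrt_mul_sub (by positivity) (by simp [a])
      (by simp [a, n]; linarith)
  have hterm : ∀ i ∈ range (m + 1), 1 / √(((i : ℝ) + 1) * ((m - i : ℕ) + 1)) ≤
      ∫ x in (a i)..(a (i + 1)), g x := by
    intro i hi
    have him : i ≤ m := Nat.lt_succ_iff.mp (mem_range.mp hi)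
    have : (i : ℝ) ≤ m := by exact_mod_cast him
    have hcast : ((m - i : ℕ) : ℝ) + 1 = n - (i + 1) := by rw [Nat.cast_sub him]; ring
    have hleft : a i = (i + 1) - 1 / 2 := by simp only [a]; ring
    have hright : a (i + 1) = (i + 1) + 1 / 2 := by simp only [a]; push_cast; ring
    have hgi := hint i (by omega)
    rw [hleft, hright] at hgi ⊢
    rw [hcast]
    have h := mul_le_intervalIntegral_of_midpoint (g := g) (by norm_num) hgi
      fun t ht => by
        simpa only [g, mul_one_div] using
          two_div_sqrt_mul_sub_le (n := n) ht.1 (by linarith [ht.2]) (by linarith [ht.2])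
    linarith
  rw [Nat.sum_antidiagonal_eq_sum_range_succ_mk]
  calc _ ≤ ∑ i ∈ range (m + 1), ∫ x in (a i)..(a (i + 1)), g x := sum_le_sum hterm
    _ = arcsin (2 * a (m + 1) / n - 1) - arcsin (2 * a 0 / n - 1) := by
      rw [intervalIntegral.sum_integral_adjacent_intervals hint]
      exact integral_one_div_sqrt_mul_sub (by simp [a]) (by simp [a]; positivity)
        (by simp [a, n]; linarith)
    _ ≤ π := by
      linarith [arcsin_le_pi_div_two (2 * a (m + 1) / n - 1),
        neg_pi_div_two_le_arcsin (2 * a 0 / n - 1)]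

theorem mul_log_div_eq_sub (a : ℝ) {b : ℝ} (hb : b ≠ 0) :
    a * log (a / b) = a * log a - a * log b := by
  rcases eq_or_ne a 0 with rfl | ha
  · simp
  · rw [log_div ha hb, mul_sub]

theorem klBin_eq_neg_binEntropy_sub (a : ℝ) {b : ℝ} (hb₀ : b ≠ 0) (hb₁ : b ≠ 1) :
    klBin a b = -binEntropy a - (a * log b + (1 - a) * log (1 - b)) := by
  rw [klBin, binEntropy, mul_log_div_eq_sub a hb₀, mul_log_div_eq_sub _ (sub_ne_zero.mpr hb₁.symm),
    log_inv, log_inv]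
  ring

theorem continuous_klBin_left {b : ℝ} (hb₀ : b ≠ 0) (hb₁ : b ≠ 1) :
    Continuous fun a => klBin a b := by
  simp_rw [klBin_eq_neg_binEntropy_sub _ hb₀ hb₁]
  fun_prop

theorem convexOn_klBin_left {b : ℝ} (hb₀ : b ≠ 0) (hb₁ : b ≠ 1) :
    ConvexOn ℝ (Set.Icc 0 1) fun a => klBin a b := by
  simp_rw [klBin_eq_neg_binEntropy_sub _ hb₀ hb₁]
  refine strictConcave_binEntropy.concaveOn.neg.sub ⟨convex_Icc 0 1, fun x _ y _ s t _ _ hst => ?_⟩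
  simp only [smul_eq_mul]
  exact le_of_eq (by linear_combination log (1 - b) * hst)

theorem ConvexOn.exp {E : Type*} [AddCommGroup E] [Module ℝ E] {s : Set E} {f : E → ℝ}
    (hf : ConvexOn ℝ s f) : ConvexOn ℝ s fun x => exp (f x) :=
  ⟨hf.1, fun _ hx _ hy _ _ ha hb hab => (exp_le_exp.2 (hf.2 hx hy ha hb hab)).trans
    (convexOn_exp.2 trivial trivial ha hb hab)⟩

theorem convexOn_exp_mul_klBin {n p : ℝ} (hn : 0 < n) (hp₀ : p ≠ 0) (hp₁ : p ≠ 1) :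
    ConvexOn ℝ (Set.Icc 0 n) fun s => exp (n * klBin (s / n) p) := by
  refine ConvexOn.exp ⟨convex_Icc 0 n, fun x hx y hy a b ha hb hab => ?_⟩
  have hmem : ∀ z ∈ Set.Icc 0 n, z / n ∈ Set.Icc (0 : ℝ) 1 := fun z hz =>
    ⟨div_nonneg hz.1 hn.le, (div_le_one hn).mpr hz.2⟩
  have h := (convexOn_klBin_left hp₀ hp₁).2 (hmem x hx) (hmem y hy) ha hb hab
  simp only [smul_eq_mul] at h ⊢
  rw [add_div, mul_div_assoc, mul_div_assoc]
  nlinarith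

theorem continuous_exp_mul_klBin (n : ℝ) {p : ℝ} (hp₀ : p ≠ 0) (hp₁ : p ≠ 1) :
    Continuous fun s => exp (n * klBin (s / n) p) := by
  have := continuous_klBin_left hp₀ hp₁
  fun_prop

theorem exp_natCast_mul_log_div (k : ℕ) {c : ℝ} (hc : 0 < c) :
    exp (k * log (k / c)) = (k / c) ^ k := by
  rcases eq_or_ne k 0 with rfl | hk
  · simp
  · rw [exp_nat_mul, exp_log (by positivity)]

theorem pow_mul_one_sub_pow_mul_exp_klBin {n i j : ℕ} (hij : i + j = n) (hn : n ≠ 0) {p : ℝ}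
    (hp₀ : 0 < p) (hp₁ : p < 1) :
    p ^ i * (1 - p) ^ j * exp (n * klBin (i / n) p) = (i / n) ^ i * (j / n) ^ j := by
  have hj : (j : ℝ) = n - i := by rw [← hij]; push_cast; ring
  have hq : 0 < 1 - p := sub_pos.mpr hp₁
  have hexp : n * klBin (i / n) p = i * log (i / (n * p)) + j * log (j / (n * (1 - p))) := by
    rw [klBin, hj]; field_simp
  rw [hexp, exp_add, exp_natCast_mul_log_div _ (by positivity),
    exp_natCast_mul_log_div _ (by positivity), mul_mul_mul_comm, ← mul_pow, ← mul_pow]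
  congr 2 <;> field_simp

/-- `E[G(K)]` for `K ∼ Bin(n, p)`; a pair `(i, j)` of the antidiagonal stands for `i` successes
and `j` failures. -/
noncomputable def binomialExpectation (n : ℕ) (p : ℝ) (G : ℝ → ℝ) : ℝ :=
  ∑ ij ∈ antidiagonal n, n.choose ij.1 * p ^ ij.1 * (1 - p) ^ ij.2 * G ij.1

theorem binomialExpectation_zero (p : ℝ) (G : ℝ → ℝ) : binomialExpectation 0 p G = G 0 := by
  simp [binomialExpectation]

theorem binomialExpectation_succ (n : ℕ) (p : ℝ) (G : ℝ → ℝ) :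
    binomialExpectation (n + 1) p G =
      (1 - p) * binomialExpectation n p G + p * binomialExpectation n p (fun s => G (s + 1)) := by
  simp only [binomialExpectation, mul_sum]
  rw [sum_congr rfl fun ij _ => by rw [mul_assoc, mul_assoc],
    sum_antidiagonal_choose_succ_mul (fun i j => p ^ i * ((1 - p) ^ j * G i))]
  congr 1 <;> refine sum_congr rfl fun ij hij => ?_
  · rw [pow_succ]; ring
  · rw [← HasAntidiagonal.mem_antidiagonal.mp hij, Nat.choose_symm_add]; push_cast; ring

theorem binomialExpectation_exp_mul_klBin {n : ℕ} (hn : n ≠ 0) {p : ℝ} (hp₀ : 0 < p)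
    (hp₁ : p < 1) :
    binomialExpectation n p (fun s => exp (n * klBin (s / n) p)) =
      ∑ ij ∈ antidiagonal n, (n.choose ij.1 : ℝ) * (ij.1 / n) ^ ij.1 * (ij.2 / n) ^ ij.2 := by
  refine sum_congr rfl fun ij hij => ?_
  calc _ = (n.choose ij.1 : ℝ) *
        (p ^ ij.1 * (1 - p) ^ ij.2 * exp (n * klBin (ij.1 / n) p)) := by ring
    _ = _ := by
      rw [pow_mul_one_sub_pow_mul_exp_klBin (mem_antidiagonal.mp hij) hn hp₀ hp₁]
      ring

theorem sum_antidiagonal_choose_mul_div_pow_le {n : ℕ} (hn : 2 ≤ n) :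
    ∑ ij ∈ antidiagonal n, (n.choose ij.1 : ℝ) * (ij.1 / n) ^ ij.1 * (ij.2 / n) ^ ij.2 ≤
      exp (1 / (12 * n)) * √(π * n / 2) + 2 := by
  obtain ⟨m, rfl⟩ := Nat.exists_eq_add_of_le' hn
  set c := exp (1 / (12 * ((m + 2 : ℕ) : ℝ))) * √((m + 2 : ℕ) / (2 * π))
  set f : ℕ × ℕ → ℝ := fun ij => ((m + 2).choose ij.1 : ℝ) * (ij.1 / (m + 2 : ℕ)) ^ ij.1 *
    (ij.2 / (m + 2 : ℕ)) ^ ij.2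
  have hinner : ∀ ij ∈ antidiagonal m, f (ij.1 + 1, ij.2 + 1) ≤
      c * (1 / √(((ij.1 : ℝ) + 1) * (ij.2 + 1))) := by
    intro ij hij
    have hsum : ij.1 + 1 + (ij.2 + 1) = m + 2 := by have := mem_antidiagonal.mp hij; omega
    have h := add_choose_mul_div_pow_mul_div_pow_le (k := ij.1 + 1) (j := ij.2 + 1) (by omega)
      (by omega)
    rw [hsum, ← Nat.cast_add, hsum] at h
    simp only [f, c, mul_one_div]
    push_cast at h ⊢
    exact h
  have hsqrt : √((m + 2 : ℕ) / (2 * π)) * π = √(π * (m + 2 : ℕ) / 2) := by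
    rw [← sqrt_sq pi_pos.le, ← sqrt_mul (by positivity), sqrt_sq pi_pos.le]
    congr 1
    field_simp
  rw [Nat.sum_antidiagonal_succ, Nat.sum_antidiagonal_succ']
  calc _ = 1 + (1 + ∑ ij ∈ antidiagonal m, f (ij.1 + 1, ij.2 + 1)) := by
        have h1 : ((m : ℝ) + 1 + 1) / (m + 2) = 1 := by
          rw [div_eq_one_iff_eq (by positivity)]; ring
        simp [f, h1]
    _ ≤ 1 + (1 + ∑ ij ∈ antidiagonal m, c * (1 / √(((ij.1 : ℝ) + 1) * (ij.2 + 1)))) := by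
        gcongr with ij hij
        exact hinner ij hij
    _ ≤ 1 + (1 + c * π) := by
        rw [← mul_sum]
        gcongr
        exact sum_antidiagonal_one_div_sqrt_le_pi m
    _ = _ := by rw [mul_assoc, hsqrt]; ring

theorem sum_mem_Icc_of_mem_Icc {ι : Type*} (s : Finset ι) {g : ι → ℝ}
    (hg : ∀ i ∈ s, g i ∈ Set.Icc 0 1) : ∑ i ∈ s, g i ∈ Set.Icc 0 (#s : ℝ) :=
  ⟨sum_nonneg fun i hi => (hg i hi).1, (sum_le_sum fun i hi => (hg i hi).2).trans_eq (by simp)⟩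

section Probability

variable {Ω : Type*} [MeasurableSpace Ω] {μ : Measure Ω}

theorem Measurable.integrable_of_mem_isCompact [IsFiniteMeasure μ] {F : Ω → ℝ}
    (hF : Measurable F) {K : Set ℝ} (hK : IsCompact K) (hFK : ∀ x, F x ∈ K) :
    Integrable F μ := by
  obtain ⟨C, hC⟩ := hK.exists_bound_of_continuousOn continuousOn_id
  exact Integrable.of_bound hF.aestronglyMeasurable C (ae_of_all _ fun x => hC _ (hFK x))

theorem Continuous.integrable_comp_of_mem_isCompact [IsFiniteMeasure μ] {G : ℝ → ℝ}
    (hG : Continuous G) {F : Ω → ℝ} (hF : Measurable F) {K : Set ℝ} (hK : IsCompact K)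
    (hFK : ∀ x, F x ∈ K) : Integrable (fun x => G (F x)) μ :=
  (hG.measurable.comp hF).integrable_of_mem_isCompact (hK.image hG)
    fun x => Set.mem_image_of_mem G (hFK x)

theorem integral_pos_of_forall_pos [NeZero μ] {g : Ω → ℝ} (hg : Integrable g μ)
    (h : ∀ x, 0 < g x) : 0 < ∫ x, g x ∂μ := by
  rw [integral_pos_iff_support_of_nonneg (fun x => (h x).le) hg,
    Function.support_eq_univ fun x => (h x).ne']
  exact Measure.measure_univ_pos.mpr (NeZero.ne μ)

variable [IsProbabilityMeasure μ]

theorem integral_mem_Ioo {f : Ω → ℝ} (hf : Integrable f μ) {a b : ℝ}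
    (h : ∀ x, f x ∈ Set.Ioo a b) : ∫ x, f x ∂μ ∈ Set.Ioo a b := by
  have ha := integral_pos_of_forall_pos (μ := μ) (g := fun x => f x - a)
    (hf.sub (integrable_const a)) fun x => sub_pos.mpr (h x).1
  have hb := integral_pos_of_forall_pos (μ := μ) (g := fun x => b - f x)
    ((integrable_const b).sub hf) fun x => sub_pos.mpr (h x).2
  rw [integral_sub hf (integrable_const a)] at ha
  rw [integral_sub (integrable_const b) hf] at hb
  simp only [integral_const, probReal_univ, one_smul] at ha hb
  exact ⟨by linarith, by linarith⟩

theorem ConvexOn.integral_comp_le {G : ℝ → ℝ} (hG : ConvexOn ℝ (Set.Icc 0 1) G)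
    (hGc : Continuous G) {f : Ω → ℝ} (hf : Measurable f) (hf01 : ∀ x, f x ∈ Set.Icc 0 1) :
    ∫ x, G (f x) ∂μ ≤ (1 - ∫ x, f x ∂μ) * G 0 + (∫ x, f x ∂μ) * G 1 := by
  have hfi : Integrable f μ := hf.integrable_of_mem_isCompact isCompact_Icc hf01
  have hchord : ∀ x, G (f x) ≤ (1 - f x) * G 0 + f x * G 1 := fun x => by
    simpa using hG.2 (Set.left_mem_Icc.mpr zero_le_one) (Set.right_mem_Icc.mpr zero_le_one)
      (sub_nonneg.mpr (hf01 x).2) (hf01 x).1 (by ring)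
  have h0 : Integrable (fun x => (1 - f x) * G 0) μ := ((integrable_const 1).sub hfi).mul_const _
  have h1 : Integrable (fun x => f x * G 1) μ := hfi.mul_const _
  calc ∫ x, G (f x) ∂μ ≤ ∫ x, ((1 - f x) * G 0 + f x * G 1) ∂μ :=
        integral_mono (hGc.integrable_comp_of_mem_isCompact hf isCompact_Icc hf01) (h0.add h1)
          hchord
    _ = _ := by
      rw [integral_add h0 h1, integral_mul_const, integral_mul_const,
        integral_sub (integrable_const 1) hfi]
      simp

theorem integral_comp_sum_fin_succ_le {f : Ω → ℝ} (hf : Measurable f)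
    (hf01 : ∀ x, f x ∈ Set.Icc 0 1) (n : ℕ) {G : ℝ → ℝ} (hGc : Continuous G)
    (hG : ConvexOn ℝ (Set.Icc 0 ((n : ℝ) + 1)) G) :
    ∫ z, G (∑ i, f (z i)) ∂(Measure.pi fun _ : Fin (n + 1) => μ) ≤
      (1 - ∫ x, f x ∂μ) * ∫ y, G (∑ i, f (y i)) ∂(Measure.pi fun _ : Fin n => μ) +
        (∫ x, f x ∂μ) * ∫ y, G (∑ i, f (y i) + 1) ∂(Measure.pi fun _ : Fin n => μ) := by
  set p := ∫ x, f x ∂μ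
  set ν := Measure.pi fun _ : Fin n => μ
  set S : (Fin n → Ω) → ℝ := fun y => ∑ i, f (y i)
  have hS : Measurable S := Finset.measurable_sum _ fun i _ => hf.comp (measurable_pi_apply i)
  have hSmem : ∀ y, S y ∈ Set.Icc (0 : ℝ) n := fun y => by
    simpa using sum_mem_Icc_of_mem_Icc univ fun i _ => hf01 (y i)
  have hint : Integrable (fun x : Ω × (Fin n → Ω) => G (f x.1 + S x.2)) (μ.prod ν) :=
    hGc.integrable_comp_of_mem_isCompact ((hf.comp measurable_fst).add (hS.comp measurable_snd))
      (isCompact_Icc (a := (0 : ℝ)) (b := (n : ℝ) + 1)) fun x =>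
        ⟨add_nonneg (hf01 _).1 (hSmem _).1, by linarith [(hf01 x.1).2, (hSmem x.2).2]⟩
  have hG0 : Integrable (fun y => G (S y)) ν :=
    hGc.integrable_comp_of_mem_isCompact hS isCompact_Icc hSmem
  have hG1 : Integrable (fun y => G (S y + 1)) ν :=
    (hGc.comp (continuous_add_const 1)).integrable_comp_of_mem_isCompact hS isCompact_Icc hSmem
  -- For fixed `y`, the chord of `G` over `[S y, S y + 1]` bounds the integrand.
  have hstep : ∀ y, ∫ x, G (f x + S y) ∂μ ≤ (1 - p) * G (S y) + p * G (S y + 1) := by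
    intro y
    have hconv : ConvexOn ℝ (Set.Icc 0 1) (fun u => G (u + S y)) :=
      (hG.translate_left (S y)).subset (fun u hu => by
        simp only [Set.mem_preimage, Set.mem_Icc] at hu ⊢
        constructor <;> linarith [(hSmem y).1, (hSmem y).2]) (convex_Icc 0 1)
    simpa [add_comm] using hconv.integral_comp_le (hGc.comp (continuous_add_const _)) hf hf01
  calc _ = ∫ y, ∫ x, G (f x + S y) ∂μ ∂ν := by
        rw [← integral_prod_symm _ hint,
          ← (measurePreserving_piFinSuccAbove (fun _ => μ) 0).integral_comp']
        simp [Fin.sum_univ_succ, S, Fin.tail]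
    _ ≤ ∫ y, ((1 - p) * G (S y) + p * G (S y + 1)) ∂ν :=
      integral_mono hint.integral_prod_right ((hG0.const_mul _).add (hG1.const_mul _)) hstep
    _ = _ := by
      rw [integral_add (hG0.const_mul _) (hG1.const_mul _), integral_const_mul,
        integral_const_mul]

theorem integral_comp_sum_le_binomialExpectation {f : Ω → ℝ} (hf : Measurable f)
    (hf01 : ∀ x, f x ∈ Set.Icc 0 1) (n : ℕ) {G : ℝ → ℝ} (hGc : Continuous G)
    (hG : ConvexOn ℝ (Set.Icc 0 (n : ℝ)) G) :
    ∫ z, G (∑ i, f (z i)) ∂(Measure.pi fun _ : Fin n => μ) ≤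
      binomialExpectation n (∫ x, f x ∂μ) G := by
  have hp : ∫ x, f x ∂μ ∈ Set.Icc (0 : ℝ) 1 := (convex_Icc 0 1).integral_mem isClosed_Icc
    (ae_of_all _ hf01) (hf.integrable_of_mem_isCompact isCompact_Icc hf01)
  induction n generalizing G with
  | zero => simp [binomialExpectation_zero]
  | succ n ih =>
    push_cast at hG
    have hG1 : ConvexOn ℝ (Set.Icc 0 (n : ℝ)) (fun s => G (s + 1)) :=
      (hG.translate_left 1).subset (fun u hu => by
        simp only [Set.mem_preimage, Set.mem_Icc] at hu ⊢
        constructor <;> linarith) (convex_Icc _ _)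
    calc _ ≤ _ := integral_comp_sum_fin_succ_le hf hf01 n hGc hG
      _ ≤ _ := by
        gcongr
        · linarith [hp.2]
        · exact ih hGc (hG.subset (Set.Icc_subset_Icc_right (by simp)) (convex_Icc _ _))
        · exact hp.1
        · exact ih (hGc.comp (continuous_add_const 1)) hG1
      _ = _ := (binomialExpectation_succ n _ G).symm

theorem integral_exp_mul_klBin_sum_le {f : Ω → ℝ} (hf : Measurable f)
    (hf01 : ∀ x, f x ∈ Set.Icc 0 1) (hp : ∫ x, f x ∂μ ∈ Set.Ioo 0 1) {n : ℕ} (hn : 2 ≤ n) :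
    ∫ z, exp (n * klBin ((∑ i, f (z i)) / n) (∫ x, f x ∂μ)) ∂(Measure.pi fun _ : Fin n => μ) ≤
      exp (1 / (12 * n)) * √(π * n / 2) + 2 :=
  (integral_comp_sum_le_binomialExpectation hf hf01 n
    (continuous_exp_mul_klBin _ hp.1.ne' hp.2.ne)
    (convexOn_exp_mul_klBin (by positivity) hp.1.ne' hp.2.ne)).trans
    ((binomialExpectation_exp_mul_klBin (by omega) hp.1 hp.2).trans_le
      (sum_antidiagonal_choose_mul_div_pow_le hn))

theorem ofReal_one_sub_le_measure_lt_div {W : Ω → ℝ} (hW : ∀ x, 0 ≤ W x)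
    (hWi : Integrable W μ) {ξ δ : ℝ} (hξ : 0 < ξ) (hδ : 0 < δ) (hWξ : ∫ x, W x ∂μ ≤ ξ) :
    ENNReal.ofReal (1 - δ) ≤ μ {x | W x < ξ / δ} := by
  have hmeas : NullMeasurableSet {x | ξ / δ ≤ W x} μ :=
    hWi.aemeasurable.nullMeasurable measurableSet_Ici
  have hmarkov : μ.real {x | ξ / δ ≤ W x} ≤ δ := by
    have h := (mul_meas_ge_le_integral_of_nonneg (ae_of_all _ hW) hWi (ξ / δ)).trans hWξ
    rwa [div_mul_comm, mul_le_iff_le_one_left hξ, div_le_one hδ] at h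
  have hcompl : {x | W x < ξ / δ} = {x | ξ / δ ≤ W x}ᶜ := by ext; simp
  rw [hcompl, ← ofReal_measureReal, measureReal_compl₀ hmeas, probReal_univ]
  exact ENNReal.ofReal_le_ofReal (by linarith)

end Probability

theorem sub_le_mul_log_div {a b : ℝ} (ha : 0 ≤ a) (hb : 0 ≤ b) (hab : b = 0 → a = 0) :
    a - b ≤ a * log (a / b) := by
  rcases ha.eq_or_lt with rfl | ha
  · simpa using hb
  have hb : 0 < b := hb.lt_of_ne fun h => ha.ne' (hab h.symm)
  have h := one_sub_inv_le_log_of_pos (div_pos ha hb)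
  rw [inv_div] at h
  calc a - b = a * (1 - b / a) := by field_simp
    _ ≤ a * log (a / b) := mul_le_mul_of_nonneg_left h ha.le

theorem sum_mul_log_div_nonneg {ι : Type*} [Fintype ι] {φ ψ : ι → ℝ} (hφ : ∀ i, 0 ≤ φ i)
    (hψ : ∀ i, 0 ≤ ψ i) (hac : ∀ i, ψ i = 0 → φ i = 0) (hsum : ∑ i, ψ i ≤ ∑ i, φ i) :
    0 ≤ ∑ i, φ i * log (φ i / ψ i) :=
  calc 0 ≤ ∑ i, (φ i - ψ i) := by rw [sum_sub_distrib]; linarith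
    _ ≤ _ := sum_le_sum fun i _ => sub_le_mul_log_div (hφ i) (hψ i) (hac i)

theorem pacBayes_core_inequality_general
    {Z : Type*} [Fintype Z]
    (φ ψ : Z → ℝ)
    (hφ0 : ∀ z, 0 ≤ φ z) (hφ1 : ∑ z, φ z = 1)
    (hψ0 : ∀ z, 0 ≤ ψ z) (hψ1 : ∑ z, ψ z = 1)
    (hac : ∀ z, ψ z = 0 → φ z = 0)
    {Z0 : Type*} [MeasurableSpace Z0]
    (μ₀ : Measure Z0) [IsProbabilityMeasure μ₀]
    (loss : Z0 → Z → ℝ)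
    (hloss_meas : ∀ z, Measurable fun z0 => loss z0 z)
    (hloss : ∀ z0 z, loss z0 z ∈ Set.Ioo (0 : ℝ) 1)
    (M : ℕ) (hM : 2 ≤ M)
    (δ : ℝ) (hδ : δ ∈ Set.Ioo (0 : ℝ) 1) :
    (Measure.pi fun _ : Fin M => μ₀)
      {Zv : Fin M → Z0 |
        (1 / (M : ℝ)) * ∑ v, ∑ z, φ z * loss (Zv v) z ∈ Set.Ioo (0 : ℝ) 1 →
        (M : ℝ) * klBin ((1 / (M : ℝ)) * ∑ v, ∑ z, φ z * loss (Zv v) z)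
            (∫ z0, ∑ z, φ z * loss z0 z ∂μ₀)
          ≤ (∑ z, φ z * Real.log (φ z / ψ z))
            + Real.log (Real.exp (1 / (12 * (M : ℝ))) * Real.sqrt (Real.pi * M / 2) + 2)
            - Real.log δ}
      ≥ ENNReal.ofReal (1 - δ) := by
  set f : Z0 → ℝ := fun z0 => ∑ z, φ z * loss z0 z
  have hf : Measurable f := Finset.measurable_sum _ fun z _ => (hloss_meas z).const_mul (φ z)
  have hf01 : ∀ z0, f z0 ∈ Set.Ioo 0 1 := fun z0 =>
    (convex_Ioo 0 1).sum_mem (fun z _ => hφ0 z) hφ1 fun z _ => hloss z0 z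
  have hf01' : ∀ z0, f z0 ∈ Set.Icc 0 1 := fun z0 => Set.Ioo_subset_Icc_self (hf01 z0)
  have hp : ∫ z0, f z0 ∂μ₀ ∈ Set.Ioo 0 1 :=
    integral_mem_Ioo (hf.integrable_of_mem_isCompact isCompact_Icc hf01') hf01
  set ξ := exp (1 / (12 * (M : ℝ))) * √(π * M / 2) + 2
  have hξ : 0 < ξ := by positivity
  have hW : Integrable (fun Zv : Fin M → Z0 =>
      exp (M * klBin ((∑ v, f (Zv v)) / M) (∫ z0, f z0 ∂μ₀))) (Measure.pi fun _ => μ₀) :=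
    (continuous_exp_mul_klBin _ hp.1.ne' hp.2.ne).integrable_comp_of_mem_isCompact
      (Finset.measurable_sum _ fun v _ => hf.comp (measurable_pi_apply v)) isCompact_Icc
      fun Zv => by simpa using sum_mem_Icc_of_mem_Icc univ fun v _ => hf01' (Zv v)
  refine (ofReal_one_sub_le_measure_lt_div (fun _ => (exp_pos _).le) hW hξ hδ.1
    (integral_exp_mul_klBin_sum_le hf hf01' hp hM)).trans (measure_mono fun Zv hZv _ => ?_)
  have hKL := sum_mul_log_div_nonneg hφ0 hψ0 hac (hψ1.trans hφ1.symm).le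
  have hlog := (lt_log_iff_exp_lt (div_pos hξ hδ.1)).mpr hZv
  rw [log_div hξ.ne' hδ.1.ne'] at hlog
  simp only [one_div_mul_eq_div] at hlog ⊢
  linarith

/-- Core PAC-Bayes inequality (Steps 1–2 of the proof of Theorem 1): for probability
mass functions `φ ≪ ψ` on a nonempty finite type `𝒵`, a probability space `(𝒵₀, μ₀)`,
a measurable loss with values in `(0,1)`, and `M ≥ 2` i.i.d. draws `Z₀^(1), …, Z₀^(M)`
from `μ₀`, with probability at least `1 − δ`, on the event that the empirical risk
`R_M ∈ (0,1)`,
`M · kl(R_M ‖ R₀) ≤ KL(φ‖ψ) + log( exp(1/(12M)) √(πM/2) + 2 ) − log δ`. -/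
theorem pacBayes_core_inequality
    {Z : Type*} [Fintype Z] [Nonempty Z]
    (φ ψ : Z → ℝ)
    (hφ0 : ∀ z, 0 ≤ φ z) (hφ1 : ∑ z, φ z = 1)
    (hψ0 : ∀ z, 0 ≤ ψ z) (hψ1 : ∑ z, ψ z = 1)
    (hac : ∀ z, ψ z = 0 → φ z = 0)
    {Z0 : Type*} [MeasurableSpace Z0]
    (μ₀ : Measure Z0) [IsProbabilityMeasure μ₀]
    (loss : Z0 → Z → ℝ)
    (hloss_meas : ∀ z, Measurable fun z0 => loss z0 z)
    (hloss : ∀ z0 z, loss z0 z ∈ Set.Ioo (0 : ℝ) 1)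
    (M : ℕ) (hM : 2 ≤ M)
    (δ : ℝ) (hδ : δ ∈ Set.Ioo (0 : ℝ) 1) :
    (Measure.pi fun _ : Fin M => μ₀)
      {Zv : Fin M → Z0 |
        (1 / (M : ℝ)) * ∑ v, ∑ z, φ z * loss (Zv v) z ∈ Set.Ioo (0 : ℝ) 1 →
        (M : ℝ) * klBin ((1 / (M : ℝ)) * ∑ v, ∑ z, φ z * loss (Zv v) z)
            (∫ z0, ∑ z, φ z * loss z0 z ∂μ₀)
          ≤ (∑ z, φ z * Real.log (φ z / ψ z))
            + Real.log (Real.exp (1 / (12 * (M : ℝ))) * Real.sqrt (Real.pi * M / 2) + 2)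
            - Real.log δ}
      ≥ ENNReal.ofReal (1 - δ) :=
  pacBayes_core_inequality_general φ ψ hφ0 hφ1 hψ0 hψ1 hac μ₀ loss hloss_meas hloss M hM δ hδ
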